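/- arXiv:1706.08710 — 3 statements merged into one kernel-verified Lean document; each statement's English description precedes it below -/
import Mathlib

section
/- Let K be an imaginary quadratic number field with ring of integers O_K, and let 𝔞 be a nonzero ideal of O_K. Then φ_K(𝔞)/N(𝔞) ≥ (φ(N(𝔞))/N(𝔞))², where φ_K(𝔞) = N(𝔞)·∏_{𝔭 | 𝔞}(1 − 1/N(𝔭)) is the ideal-theoretic Euler totient and φ is the classical Euler totient. -/
open NumberField UniqueFactorizationMonoid Classical

lemma exists_nat_prime_mem {R : Type*} [CommRing R] (𝔭 : Ideal R) (hP : 𝔭.IsPrime) :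
    ∀ n : ℕ, 1 < n → (n : R) ∈ 𝔭 → ∃ p : ℕ, p.Prime ∧ (p : R) ∈ 𝔭 := by
  intro n
  induction n using Nat.strong_induction_on with
  | _ n ih =>
    intro hn hmem
    have hq : n.minFac.Prime := Nat.minFac_prime (by omega)
    obtain ⟨m, hm⟩ := Nat.minFac_dvd n
    have hmul : ((n.minFac : R) * (m : R)) ∈ 𝔭 := by
      rw [← Nat.cast_mul, ← hm]; exact hmem
    rcases hP.mem_or_mem hmul with h1 | h2
    · exact ⟨n.minFac, hq, h1⟩
    · have hm0 : m ≠ 0 := by rintro rfl; simp at hm; omega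
      rcases eq_or_lt_of_le (Nat.one_le_iff_ne_zero.mpr hm0) with h1 | hm1
      · refine ⟨n, ?_, hmem⟩
        have hnm : n = n.minFac := by subst h1; simpa using hm
        rw [hnm]; exact hq
      · exact ih m (by rw [hm]; exact by nlinarith [hq.one_lt]) hm1 h2

lemma absNorm_span_natCast (K : Type*) [Field K] [NumberField K]
    (hdeg : Module.finrank ℚ K = 2) (p : ℕ) :
    Ideal.absNorm (Ideal.span {((p : 𝓞 K))}) = p ^ 2 := by
  rw [Ideal.absNorm_span_singleton,
    show ((p : 𝓞 K)) = algebraMap ℤ (𝓞 K) (p : ℤ) by push_cast; rfl,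
    Algebra.norm_algebraMap_of_basis (Module.Free.chooseBasis ℤ (𝓞 K)),
    show Fintype.card (Module.Free.ChooseBasisIndex ℤ (𝓞 K)) = 2 by
      rw [← Module.finrank_eq_card_chooseBasisIndex, RingOfIntegers.rank K, hdeg]]
  simp [Int.natAbs_pow]

lemma prime_ideal_norm_facts (K : Type*) [Field K] [NumberField K]
    (hdeg : Module.finrank ℚ K = 2) (𝔭 : Ideal (𝓞 K)) (hp : Prime 𝔭) :
    (Ideal.absNorm 𝔭).minFac.Prime ∧ (Ideal.absNorm 𝔭).minFac ∣ Ideal.absNorm 𝔭 ∧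
      Ideal.absNorm 𝔭 ∣ (Ideal.absNorm 𝔭).minFac ^ 2 ∧
      (((Ideal.absNorm 𝔭).minFac : 𝓞 K)) ∈ 𝔭 := by
  have hbot : 𝔭 ≠ ⊥ := hp.ne_zero
  have hPrime : 𝔭.IsPrime := Ideal.isPrime_of_prime hp
  have hN0 : Ideal.absNorm 𝔭 ≠ 0 := by
    rw [Ne, Ideal.absNorm_eq_zero_iff]; exact hbot
  have hN1 : Ideal.absNorm 𝔭 ≠ 1 := by
    intro h
    exact hPrime.ne_top (Ideal.absNorm_eq_one_iff.mp h)
  obtain ⟨p, hpp, hpmem⟩ :=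
    exists_nat_prime_mem 𝔭 hPrime (Ideal.absNorm 𝔭) (by omega) (Ideal.absNorm_mem 𝔭)
  have hdvdspan : 𝔭 ∣ Ideal.span {((p : 𝓞 K))} := by
    rw [Ideal.dvd_iff_le, Ideal.span_le]
    simpa using hpmem
  have hnorm_span := absNorm_span_natCast K hdeg p
  have hdvd2 : Ideal.absNorm 𝔭 ∣ p ^ 2 := by
    have := map_dvd Ideal.absNorm hdvdspan
    rwa [hnorm_span] at this
  obtain ⟨k, hk2, hkeq⟩ := (Nat.dvd_prime_pow hpp).mp hdvd2
  have hk0 : k ≠ 0 := by rintro rfl; rw [pow_zero] at hkeq; exact hN1 hkeq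
  have hminFac : (Ideal.absNorm 𝔭).minFac = p := by
    rw [hkeq, Nat.Prime.pow_minFac hpp hk0]
  refine ⟨hminFac ▸ hpp, ?_, hminFac ▸ hdvd2, hminFac ▸ hpmem⟩
  rw [hminFac, hkeq]
  exact dvd_pow_self p hk0

/-- For a nonzero ideal `𝔞` of the ring of integers of an imaginary quadratic field `K`, the
ideal-theoretic Euler totient `φ_K(𝔞) = N(𝔞)·∏_{𝔭 | 𝔞}(1 − 1/N(𝔭))` satisfies
`φ_K(𝔞)/N(𝔞) ≥ (φ(N(𝔞))/N(𝔞))²`. -/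
theorem phi_K_ratio_ge_sq
    (K : Type*) [Field K] [NumberField K]
    (hdeg : Module.finrank ℚ K = 2)
    (himag : ∀ v : InfinitePlace K, v.IsComplex)
    (𝔞 : Ideal (𝓞 K)) (h𝔞 : 𝔞 ≠ ⊥)
    (φK : ℝ)
    (hφK : φK = (Ideal.absNorm 𝔞 : ℝ) *
      ∏ 𝔭 ∈ (factors 𝔞).toFinset, (1 - 1 / (Ideal.absNorm 𝔭 : ℝ))) :
    φK / (Ideal.absNorm 𝔞 : ℝ) ≥
      ((Nat.totient (Ideal.absNorm 𝔞) : ℝ) / (Ideal.absNorm 𝔞 : ℝ)) ^ 2 := by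
  set n := Ideal.absNorm 𝔞 with hn_def
  have hn0 : n ≠ 0 := by rw [hn_def, Ne, Ideal.absNorm_eq_zero_iff]; exact h𝔞
  have hnR : (0 : ℝ) < (n : ℝ) := by exact_mod_cast Nat.pos_of_ne_zero hn0
  set S := (factors 𝔞).toFinset with hS_def
  set T := n.primeFactors with hT_def
  set g : Ideal (𝓞 K) → ℕ := fun 𝔭 => (Ideal.absNorm 𝔭).minFac with hg_def
  -- facts about each prime factor
  have hfacts : ∀ 𝔭 ∈ S, (g 𝔭).Prime ∧ g 𝔭 ∣ Ideal.absNorm 𝔭 ∧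
      Ideal.absNorm 𝔭 ∣ g 𝔭 ^ 2 ∧ ((g 𝔭 : 𝓞 K)) ∈ 𝔭 := by
    intro 𝔭 h𝔭
    exact prime_ideal_norm_facts K hdeg 𝔭 (prime_of_factor 𝔭 (Multiset.mem_toFinset.mp h𝔭))
  have hmaps : ∀ 𝔭 ∈ S, g 𝔭 ∈ T := by
    intro 𝔭 h𝔭
    obtain ⟨hp, hdvd, -, -⟩ := hfacts 𝔭 h𝔭
    refine Nat.mem_primeFactors.mpr ⟨hp, hdvd.trans ?_, hn0⟩
    exact map_dvd Ideal.absNorm (dvd_of_mem_factors (Multiset.mem_toFinset.mp h𝔭))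
  -- totient formula
  have htot : ((Nat.totient n : ℝ)) / (n : ℝ) = ∏ p ∈ T, (1 - (p : ℝ)⁻¹) := by
    have h := congrArg (fun q : ℚ => (q : ℝ)) (Nat.totient_eq_mul_prod_factors n)
    push_cast at h
    rw [h, mul_div_cancel_left₀ _ hnR.ne']
  -- fiber cardinality bound
  have hcard : ∀ p ∈ T, (S.filter (fun 𝔭 => g 𝔭 = p)).card ≤ 2 := by
    intro p hpT
    have hpp : p.Prime := Nat.prime_of_mem_primeFactors hpT
    set F := S.filter (fun 𝔭 => g 𝔭 = p) with hF_def
    have hFdvd : ∏ 𝔭 ∈ F, 𝔭 ∣ Ideal.span {((p : 𝓞 K))} := by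
      refine Finset.prod_primes_dvd _ ?_ ?_
      · intro 𝔭 h𝔭
        exact prime_of_factor 𝔭 (Multiset.mem_toFinset.mp (Finset.mem_filter.mp h𝔭).1)
      · intro 𝔭 h𝔭
        obtain ⟨h𝔭S, hgp⟩ := Finset.mem_filter.mp h𝔭
        obtain ⟨-, -, -, hmem⟩ := hfacts 𝔭 h𝔭S
        rw [Ideal.dvd_iff_le, Ideal.span_le]
        simpa [hgp] using hmem
    have hnormdvd : p ^ F.card ∣ p ^ 2 := by
      have h1 : Ideal.absNorm (∏ 𝔭 ∈ F, 𝔭) ∣ p ^ 2 := by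
        have := map_dvd Ideal.absNorm hFdvd
        rwa [absNorm_span_natCast K hdeg p] at this
      refine dvd_trans ?_ h1
      rw [map_prod, ← Finset.prod_const]
      refine Finset.prod_dvd_prod_of_dvd _ _ ?_
      intro 𝔭 h𝔭
      obtain ⟨h𝔭S, hgp⟩ := Finset.mem_filter.mp h𝔭
      obtain ⟨-, hdvd, -, -⟩ := hfacts 𝔭 h𝔭S
      rw [← hgp]; exact hdvd
    exact (Nat.pow_dvd_pow_iff_le_right hpp.one_lt).mp hnormdvd
  -- chain of inequalities
  rw [hφK, mul_div_cancel_left₀ _ hnR.ne', htot, ← Finset.prod_pow]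
  have step1 : ∏ 𝔭 ∈ S, (1 - (g 𝔭 : ℝ)⁻¹) ≤ ∏ 𝔭 ∈ S, (1 - 1 / (Ideal.absNorm 𝔭 : ℝ)) := by
    refine Finset.prod_le_prod ?_ ?_
    · intro 𝔭 h𝔭
      have hp := (hfacts 𝔭 h𝔭).1
      have : (1 : ℝ) < (g 𝔭 : ℝ) := by exact_mod_cast hp.one_lt
      simp only [sub_nonneg]
      rw [inv_le_one_iff₀]; right; linarith
    · intro 𝔭 h𝔭
      obtain ⟨hp, hdvd, -, -⟩ := hfacts 𝔭 h𝔭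
      have hbot : 𝔭 ≠ ⊥ :=
        (prime_of_factor 𝔭 (Multiset.mem_toFinset.mp h𝔭)).ne_zero
      have hNpos : 0 < Ideal.absNorm 𝔭 :=
        Nat.pos_of_ne_zero (fun h => hbot (Ideal.absNorm_eq_zero_iff.mp h))
      have hle : (g 𝔭 : ℝ) ≤ (Ideal.absNorm 𝔭 : ℝ) := by
        exact_mod_cast Nat.le_of_dvd hNpos hdvd
      have hgpos : (0 : ℝ) < (g 𝔭 : ℝ) := by exact_mod_cast hp.pos
      rw [one_div]
      gcongr
  refine le_trans ?_ step1
  rw [← Finset.prod_fiberwise_of_maps_to hmaps (fun 𝔭 => (1 - (g 𝔭 : ℝ)⁻¹))]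
  refine Finset.prod_le_prod ?_ ?_
  · intro p hp
    have : (1 : ℝ) < (p : ℝ) := by exact_mod_cast (Nat.prime_of_mem_primeFactors hp).one_lt
    positivity
  · intro p hp
    have hpp := Nat.prime_of_mem_primeFactors hp
    have h1 : (1 : ℝ) < (p : ℝ) := by exact_mod_cast hpp.one_lt
    have h0 : (0 : ℝ) ≤ 1 - (p : ℝ)⁻¹ := by
      rw [sub_nonneg, inv_le_one_iff₀]; right; linarith
    have hle1 : (1 : ℝ) - (p : ℝ)⁻¹ ≤ 1 := by
      have : (0 : ℝ) < (p : ℝ)⁻¹ := by positivity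
      linarith
    calc (1 - (p : ℝ)⁻¹) ^ 2 ≤ (1 - (p : ℝ)⁻¹) ^ (S.filter (fun 𝔭 => g 𝔭 = p)).card :=
          pow_le_pow_of_le_one h0 hle1 (hcard p hp)
      _ = ∏ 𝔭 ∈ S.filter (fun 𝔭 => g 𝔭 = p), (1 - (g 𝔭 : ℝ)⁻¹) := by
          rw [← Finset.prod_const]
          refine Finset.prod_congr rfl ?_
          intro 𝔭 h𝔭
          rw [(Finset.mem_filter.mp h𝔭).2]
end

section
/- Let O be an order in an imaginary quadratic field K with conductor u. An ideal 𝔞 ⊲ O is coprime to u (i.e., 𝔞 + uO = O) if and only if its norm N(𝔞) = #(O/𝔞) is coprime to u. -/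
open NumberField

/-!
Every order `O` is a free `ℤ`-module of finite rank, so `O / 𝔞` is a finite ring for `𝔞 ≠ 0`.
Now `𝔞 + uO = O` says exactly that `u` is a unit in `O / 𝔞`, and in a finite commutative ring an
integer is a unit iff it is coprime to the cardinality: a prime `p ∣ #R` is never a unit, while an
integer coprime to `#R` is a unit in `ZMod #R`, which maps to `R` since its characteristic
divides `#R`.
-/

lemma isUnit_natCast_iff_coprime_card {R : Type*} [CommRing R] [Finite R] (n : ℕ) :
    IsUnit (n : R) ↔ n.Coprime (Nat.card R) := by
  have := Fintype.ofFinite R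
  rw [Nat.card_eq_fintype_card]
  refine ⟨fun hn => Nat.coprime_of_dvd fun p hp hpn hpR => ?_, fun hn => ?_⟩
  · have : Fact p.Prime := ⟨hp⟩
    exact not_isUnit_prime_of_dvd_card hpR (isUnit_of_dvd_unit (Nat.cast_dvd_cast hpn) hn)
  · have hchar : ringChar R ∣ Fintype.card R := ringChar.dvd (Nat.cast_card_eq_zero R)
    simpa using ((ZMod.isUnit_iff_coprime n _).mpr hn).map (ZMod.castHom hchar R)

lemma Ideal.sup_span_singleton_eq_top_iff_isUnit_mk {R : Type*} [CommRing R] (I : Ideal R)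
    (x : R) : I ⊔ span {x} = ⊤ ↔ IsUnit (Quotient.mk I x) := by
  rw [← span_singleton_eq_top, ← Set.image_singleton (f := Quotient.mk I),
    ← map_span (Quotient.mk I), ← comap_eq_top_iff (f := Quotient.mk I),
    comap_map_of_surjective _ Quotient.mk_surjective, ← RingHom.ker_eq_comap_bot, mk_ker,
    sup_comm]

lemma Ideal.sup_span_natCast_eq_top_iff_coprime_card {R : Type*} [CommRing R] (I : Ideal R)
    [Finite (R ⧸ I)] (n : ℕ) : I ⊔ span {(n : R)} = ⊤ ↔ (Nat.card (R ⧸ I)).Coprime n := by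
  rw [sup_span_singleton_eq_top_iff_isUnit_mk, map_natCast, isUnit_natCast_iff_coprime_card,
    Nat.coprime_comm]

lemma Subalgebra.finite_int_of_le_integralClosure {K : Type*} [Field K] [NumberField K]
    {O : Subalgebra ℤ K} (hO : O ≤ integralClosure ℤ K) : Module.Finite ℤ O :=
  have : IsNoetherian ℤ (integralClosure ℤ K) := inferInstanceAs (IsNoetherian ℤ (𝓞 K))
  .of_injective (inclusion hO).toLinearMap (inclusion_injective hO)

theorem ideal_coprime_conductor_iff_norm_coprime_general
    (K : Type*) [Field K] [NumberField K]
    (O : Subalgebra ℤ K)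
    (hOint : ∀ x : O, IsIntegral ℤ (x : K))
    (u : ℕ)
    (𝔞 : Ideal O) (h𝔞 : 𝔞 ≠ ⊥) :
    𝔞 ⊔ Ideal.span {(u : O)} = ⊤ ↔ Nat.Coprime (Nat.card (O ⧸ 𝔞)) u := by
  have : Module.Finite ℤ O := Subalgebra.finite_int_of_le_integralClosure fun x hx => hOint ⟨x, hx⟩
  have : Module.Free ℤ O := Module.free_of_finite_type_torsion_free'
  have : Finite (O ⧸ 𝔞) := Ideal.finiteQuotientOfFreeOfNeBot 𝔞 h𝔞
  exact 𝔞.sup_span_natCast_eq_top_iff_coprime_card u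

/-- Let `O` be an order in an imaginary quadratic field `K` with conductor `u`. An ideal
`𝔞 ⊲ O` is coprime to `u` (i.e. `𝔞 + uO = O`) if and only if its norm `N(𝔞) = #(O/𝔞)` is
coprime to `u`. -/
theorem ideal_coprime_conductor_iff_norm_coprime
    (K : Type*) [Field K] [NumberField K]
    (hdeg : Module.finrank ℚ K = 2)
    (himag : ∀ v : InfinitePlace K, v.IsComplex)
    (O : Subalgebra ℤ K)
    (hOint : ∀ x : O, IsIntegral ℤ (x : K))
    (hOfull : ∃ x : O, (x : K) ∉ Set.range (algebraMap ℚ K))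
    (u : ℕ) (hu0 : 0 < u)
    (hu : (∀ x : 𝓞 K, (u : K) * x ∈ O) ∧
      ∀ m : ℕ, 0 < m → (∀ x : 𝓞 K, (m : K) * x ∈ O) → u ∣ m)
    (𝔞 : Ideal O) (h𝔞 : 𝔞 ≠ ⊥) :
    𝔞 ⊔ Ideal.span {(u : O)} = ⊤ ↔ Nat.Coprime (Nat.card (O ⧸ 𝔞)) u :=
  ideal_coprime_conductor_iff_norm_coprime_general K O hOint u 𝔞 h𝔞
end

section
/- Let O be an order in an imaginary quadratic field K with conductor u. The map 𝔞 ↦ 𝔞 ∩ O gives an isomorphism from the group of fractional O_K-ideals coprime to u onto the group of fractional O-ideals coprime to u, with inverse 𝔞 ↦ 𝔞·O_K; moreover, this isomorphism preserves norms: N_O(𝔞) = N_{O_K}(𝔞·O_K) for 𝔞 coprime to u. -/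
open NumberField

/-- The inclusion of an order `O` of a number field `K` into the ring of integers `𝓞 K`. -/
def orderInclusion {K : Type*} [Field K] [NumberField K] (O : Subalgebra ℤ K)
    (hOint : ∀ x : O, IsIntegral ℤ (x : K)) : O →+* 𝓞 K where
  toFun x := ⟨(x : K), hOint x⟩
  map_one' := by ext; simp; rfl
  map_mul' x y := by ext; simp; rfl
  map_zero' := by ext; simp; rfl
  map_add' x y := by ext; simp; rfl

/-!
The only property of the conductor used is `u · 𝓞 K ⊆ O`, so we work with an injective ring map
`f : R → S` and `c : R` with `f c · S ⊆ f R`. If `𝔞 + f(c) S = S`, then also `𝔞 + f(c)² S = S`;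
writing `1 = a + f(c)² y` and `f r = f(c) y` gives `1 - c r ∈ f⁻¹ 𝔞`. Modulo `𝔞`, every `x : S`
is therefore congruent to `f r · (f c · x) ∈ f R`, which yields both `(f⁻¹ 𝔞) S = 𝔞` and
`R / f⁻¹ 𝔞 ≅ S / 𝔞`. Dually, if `𝔟 + c R = R`, then `c` multiplies `𝔟 S ∩ R` into `𝔟`, so
`𝔟 S ∩ R = 𝔟`. Contraction is thus inverse to extension, which is multiplicative.
-/

namespace Ideal

section Conductor

variable {R S : Type*} [CommRing R] [CommRing S] {f : R →+* S} {c : R}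

theorem exists_one_sub_mul_mem_comap (hc : ∀ s : S, ∃ r : R, f r = f c * s) {𝔞 : Ideal S}
    (h𝔞 : 𝔞 ⊔ span {f c} = ⊤) : ∃ r : R, 1 - c * r ∈ 𝔞.comap f := by
  have h𝔞₂ : span {f c ^ 2} ⊔ 𝔞 = ⊤ := by
    rw [← span_singleton_pow, sup_comm]; exact sup_pow_eq_top h𝔞
  obtain ⟨y, a, ha, hya⟩ := mem_span_singleton_sup.mp (h𝔞₂ ▸ Submodule.mem_top (x := 1))
  obtain ⟨r, hr⟩ := hc y
  refine ⟨r, ?_⟩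
  have : f (1 - c * r) = a := by rw [map_sub, map_one, map_mul, hr]; linear_combination -hya
  rwa [mem_comap, this]

theorem comap_sup_span_singleton_eq_top (hc : ∀ s : S, ∃ r : R, f r = f c * s) {𝔞 : Ideal S}
    (h𝔞 : 𝔞 ⊔ span {f c} = ⊤) : 𝔞.comap f ⊔ span {c} = ⊤ := by
  obtain ⟨r, hr⟩ := exists_one_sub_mul_mem_comap hc h𝔞
  rw [eq_top_iff_one, ← sub_add_cancel 1 (c * r)]
  exact Submodule.add_mem_sup hr (mem_span_singleton'.mpr ⟨r, mul_comm r c⟩)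

theorem exists_mem_comap_eq_mul (hc : ∀ s : S, ∃ r : R, f r = f c * s) {𝔞 : Ideal S}
    {x : S} (hx : x ∈ 𝔞) : ∃ t ∈ 𝔞.comap f, f t = f c * x := by
  obtain ⟨t, ht⟩ := hc x
  exact ⟨t, by rw [mem_comap, ht]; exact 𝔞.mul_mem_left _ hx, ht⟩

theorem map_comap_eq_of_sup_span_singleton_eq_top (hc : ∀ s : S, ∃ r : R, f r = f c * s)
    {𝔞 : Ideal S} (h𝔞 : 𝔞 ⊔ span {f c} = ⊤) : (𝔞.comap f).map f = 𝔞 := by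
  refine le_antisymm map_comap_le ?_
  have hmul : span {f c} * 𝔞 ≤ (𝔞.comap f).map f := span_singleton_mul_le_iff.mpr fun x hx => by
    obtain ⟨t, ht, htx⟩ := exists_mem_comap_eq_mul hc hx
    exact htx ▸ mem_map_of_mem f ht
  calc 𝔞 = 𝔞 * ((𝔞.comap f).map f ⊔ span {f c}) := by
        rw [← Set.image_singleton, ← map_span, ← map_sup,
          comap_sup_span_singleton_eq_top hc h𝔞, map_top, mul_top]
    _ ≤ (𝔞.comap f).map f := by
        rw [mul_sup, mul_comm 𝔞 (span _)]
        exact sup_le mul_le_right hmul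

theorem quotientMap_comap_bijective (hc : ∀ s : S, ∃ r : R, f r = f c * s) {𝔞 : Ideal S}
    (h𝔞 : 𝔞 ⊔ span {f c} = ⊤) : Function.Bijective (quotientMap 𝔞 f le_rfl) := by
  refine ⟨quotientMap_injective, fun z => ?_⟩
  obtain ⟨x, rfl⟩ := Quotient.mk_surjective z
  obtain ⟨r, hr⟩ := exists_one_sub_mul_mem_comap hc h𝔞
  obtain ⟨t, ht⟩ := hc x
  refine ⟨Quotient.mk _ (r * t), ?_⟩
  rw [quotientMap_mk, Quotient.eq]
  have : f (r * t) - x = -(f (1 - c * r) * x) := by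
    rw [map_mul, ht, map_sub, map_one, map_mul]; ring
  rw [this]
  exact neg_mem (mul_mem_right _ _ hr)

theorem natCard_quotient_comap_eq (hc : ∀ s : S, ∃ r : R, f r = f c * s) {𝔞 : Ideal S}
    (h𝔞 : 𝔞 ⊔ span {f c} = ⊤) : Nat.card (R ⧸ 𝔞.comap f) = Nat.card (S ⧸ 𝔞) :=
  Nat.card_congr (Equiv.ofBijective _ (quotientMap_comap_bijective hc h𝔞))

theorem map_sup_span_singleton_eq_top {𝔟 : Ideal R} (h𝔟 : 𝔟 ⊔ span {c} = ⊤) :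
    𝔟.map f ⊔ span {f c} = ⊤ := by
  rw [← Set.image_singleton, ← map_span, ← map_sup, h𝔟, map_top]

theorem mul_mem_of_mem_comap_map (hf : Function.Injective f)
    (hc : ∀ s : S, ∃ r : R, f r = f c * s) {𝔟 : Ideal R} {x : R} (hx : x ∈ (𝔟.map f).comap f) :
    c * x ∈ 𝔟 := by
  obtain ⟨n, a, g, hag⟩ := Submodule.mem_span_set'.mp (mem_comap.mp hx)
  choose b hb hbg using fun i => (g i).2
  choose r hr using fun i => hc (a i)
  suffices f (c * x) = f (∑ i, r i * b i) from
    hf this ▸ _root_.sum_mem fun i _ => mul_mem_left _ _ (hb i)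
  simp only [map_mul, map_sum, hr, hbg, ← hag, Finset.mul_sum, smul_eq_mul, mul_assoc]

theorem comap_map_eq_of_sup_span_singleton_eq_top (hf : Function.Injective f)
    (hc : ∀ s : S, ∃ r : R, f r = f c * s) {𝔟 : Ideal R} (h𝔟 : 𝔟 ⊔ span {c} = ⊤) :
    (𝔟.map f).comap f = 𝔟 := by
  refine le_antisymm ?_ le_comap_map
  calc (𝔟.map f).comap f = (𝔟.map f).comap f * (𝔟 ⊔ span {c}) := by rw [h𝔟, mul_top]
    _ ≤ 𝔟 := by
        rw [mul_sup, mul_comm _ (span _)]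
        exact sup_le mul_le_right (span_singleton_mul_le_iff.mpr fun x hx =>
          mul_mem_of_mem_comap_map hf hc hx)

theorem comap_mul_of_sup_span_singleton_eq_top (hf : Function.Injective f)
    (hc : ∀ s : S, ∃ r : R, f r = f c * s) {𝔞 𝔟 : Ideal S} (h𝔞 : 𝔞 ⊔ span {f c} = ⊤)
    (h𝔟 : 𝔟 ⊔ span {f c} = ⊤) : (𝔞 * 𝔟).comap f = 𝔞.comap f * 𝔟.comap f := by
  have hcop : 𝔞.comap f * 𝔟.comap f ⊔ span {c} = ⊤ := by
    have ha := comap_sup_span_singleton_eq_top hc h𝔞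
    have hb := comap_sup_span_singleton_eq_top hc h𝔟
    rw [← isCoprime_iff_sup_eq] at ha hb ⊢
    exact ha.mul_left hb
  conv_lhs => rw [← map_comap_eq_of_sup_span_singleton_eq_top hc h𝔞,
    ← map_comap_eq_of_sup_span_singleton_eq_top hc h𝔟, ← Ideal.map_mul]
  exact comap_map_eq_of_sup_span_singleton_eq_top hf hc hcop

end Conductor

end Ideal

section Order

variable {K : Type*} [Field K] [NumberField K] {O : Subalgebra ℤ K}
  {hOint : ∀ x : O, IsIntegral ℤ (x : K)}

theorem orderInclusion_injective : Function.Injective (orderInclusion O hOint) := fun _ _ h =>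
  Subtype.ext (congrArg (fun z : 𝓞 K => (z : K)) h)

theorem exists_orderInclusion_eq_natCast_mul {u : ℕ} (hu : ∀ x : 𝓞 K, (u : K) * x ∈ O)
    (x : 𝓞 K) : ∃ y : O, orderInclusion O hOint y = orderInclusion O hOint u * x :=
  ⟨⟨_, hu x⟩, by rw [map_natCast]; ext; push_cast; rfl⟩

end Order

theorem ideal_correspondence_coprime_conductor_general
    (K : Type*) [Field K] [NumberField K]
    (O : Subalgebra ℤ K)
    (hOint : ∀ x : O, IsIntegral ℤ (x : K))
    (u : ℕ)
    (hu : (∀ x : 𝓞 K, (u : K) * x ∈ O) ∧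
      ∀ m : ℕ, 0 < m → (∀ x : 𝓞 K, (m : K) * x ∈ O) → u ∣ m) :
    -- `𝔞 ↦ 𝔞 ∩ O` sends ideals of `𝓞 K` coprime to `u` to ideals of `O` coprime to `u`,
    -- is multiplicative, has `𝔟 ↦ 𝔟·𝓞 K` as two-sided inverse, and preserves norms
    (∀ 𝔞 : Ideal (𝓞 K), 𝔞 ≠ ⊥ → 𝔞 ⊔ Ideal.span {(u : 𝓞 K)} = ⊤ →
      (Ideal.comap (orderInclusion O hOint) 𝔞 ⊔ Ideal.span {(u : O)} = ⊤ ∧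
        Ideal.map (orderInclusion O hOint) (Ideal.comap (orderInclusion O hOint) 𝔞) = 𝔞 ∧
        Nat.card (O ⧸ Ideal.comap (orderInclusion O hOint) 𝔞) = Ideal.absNorm 𝔞)) ∧
    (∀ 𝔞 𝔟 : Ideal (𝓞 K), 𝔞 ⊔ Ideal.span {(u : 𝓞 K)} = ⊤ → 𝔟 ⊔ Ideal.span {(u : 𝓞 K)} = ⊤ →
      Ideal.comap (orderInclusion O hOint) (𝔞 * 𝔟) =
        Ideal.comap (orderInclusion O hOint) 𝔞 * Ideal.comap (orderInclusion O hOint) 𝔟) ∧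
    (∀ 𝔟 : Ideal O, 𝔟 ≠ ⊥ → 𝔟 ⊔ Ideal.span {(u : O)} = ⊤ →
      (Ideal.map (orderInclusion O hOint) 𝔟 ⊔ Ideal.span {(u : 𝓞 K)} = ⊤ ∧
        Ideal.comap (orderInclusion O hOint) (Ideal.map (orderInclusion O hOint) 𝔟) = 𝔟)) := by
  have hf := orderInclusion_injective (hOint := hOint)
  have hc := exists_orderInclusion_eq_natCast_mul (hOint := hOint) hu.1
  rw [← map_natCast (orderInclusion O hOint) u]
  refine ⟨fun 𝔞 _ h𝔞 => ⟨Ideal.comap_sup_span_singleton_eq_top hc h𝔞,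
      Ideal.map_comap_eq_of_sup_span_singleton_eq_top hc h𝔞, ?_⟩,
    fun 𝔞 𝔟 h𝔞 h𝔟 => Ideal.comap_mul_of_sup_span_singleton_eq_top hf hc h𝔞 h𝔟,
    fun 𝔟 _ h𝔟 => ⟨Ideal.map_sup_span_singleton_eq_top h𝔟,
      Ideal.comap_map_eq_of_sup_span_singleton_eq_top hf hc h𝔟⟩⟩
  rw [Ideal.natCard_quotient_comap_eq hc h𝔞, Ideal.absNorm_apply, Submodule.cardQuot_apply]

/-- Let `O` be an order in an imaginary quadratic field `K` with conductor `u`. The map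
`𝔞 ↦ 𝔞 ∩ O` is an isomorphism from the (fractional) ideals of `𝓞 K` coprime to `u` onto the
(fractional) ideals of `O` coprime to `u`, with inverse `𝔞 ↦ 𝔞·𝓞 K`, and it preserves norms:
`N_O(𝔞 ∩ O) = N_{𝓞 K}(𝔞)`. -/
theorem ideal_correspondence_coprime_conductor
    (K : Type*) [Field K] [NumberField K]
    (hdeg : Module.finrank ℚ K = 2)
    (himag : ∀ v : InfinitePlace K, v.IsComplex)
    (O : Subalgebra ℤ K)
    (hOint : ∀ x : O, IsIntegral ℤ (x : K))
    (hOfull : ∃ x : O, (x : K) ∉ Set.range (algebraMap ℚ K))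
    (u : ℕ) (hu0 : 0 < u)
    (hu : (∀ x : 𝓞 K, (u : K) * x ∈ O) ∧
      ∀ m : ℕ, 0 < m → (∀ x : 𝓞 K, (m : K) * x ∈ O) → u ∣ m) :
    -- `𝔞 ↦ 𝔞 ∩ O` sends ideals of `𝓞 K` coprime to `u` to ideals of `O` coprime to `u`,
    -- is multiplicative, has `𝔟 ↦ 𝔟·𝓞 K` as two-sided inverse, and preserves norms
    (∀ 𝔞 : Ideal (𝓞 K), 𝔞 ≠ ⊥ → 𝔞 ⊔ Ideal.span {(u : 𝓞 K)} = ⊤ →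
      (Ideal.comap (orderInclusion O hOint) 𝔞 ⊔ Ideal.span {(u : O)} = ⊤ ∧
        Ideal.map (orderInclusion O hOint) (Ideal.comap (orderInclusion O hOint) 𝔞) = 𝔞 ∧
        Nat.card (O ⧸ Ideal.comap (orderInclusion O hOint) 𝔞) = Ideal.absNorm 𝔞)) ∧
    (∀ 𝔞 𝔟 : Ideal (𝓞 K), 𝔞 ⊔ Ideal.span {(u : 𝓞 K)} = ⊤ → 𝔟 ⊔ Ideal.span {(u : 𝓞 K)} = ⊤ →
      Ideal.comap (orderInclusion O hOint) (𝔞 * 𝔟) =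
        Ideal.comap (orderInclusion O hOint) 𝔞 * Ideal.comap (orderInclusion O hOint) 𝔟) ∧
    (∀ 𝔟 : Ideal O, 𝔟 ≠ ⊥ → 𝔟 ⊔ Ideal.span {(u : O)} = ⊤ →
      (Ideal.map (orderInclusion O hOint) 𝔟 ⊔ Ideal.span {(u : 𝓞 K)} = ⊤ ∧
        Ideal.comap (orderInclusion O hOint) (Ideal.map (orderInclusion O hOint) 𝔟) = 𝔟)) :=
  ideal_correspondence_coprime_conductor_general K O hOint u hu
end
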